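/- Let a ∈ ℝ, M := {(z¹, z²) ∈ ℂ² : |Re z¹| < 1 and |z²| < 1}, and ρ_a(z¹, z²) := 2(Re z¹ + 1)^a (Re z² + 1)^{1−a}. Then at every point of M the complex Hessian of ρ_a is degenerate: ρ_{11̄}·ρ_{22̄} − ρ_{12̄}·ρ_{21̄} = 0, where ρ_{jk̄} denotes the iterated Wirtinger derivative ∂²ρ_a/∂z^j∂z̄^k. Moreover, if a ∉ {0, 1} then ρ_{11̄}(z) ≠ 0 at every z ∈ M, so the Hermitian matrix (ρ_{jk̄}(z)) has rank exactly 1 at every point of M. -/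

import Mathlib

/-!
Writing `u = Re z¹ + 1`, `v = Re z² + 1`, the potential `ρ_a = 2 u^a v^(1-a)` depends only on
real parts, so both Wirtinger derivatives `∂/∂z^j` and `∂/∂z̄^j` act on it as `½ ∂/∂x^j`, and
monomials `c u^p v^q` are closed under them. Since `ρ_a` is homogeneous of degree one in
`(u, v)`, its complex Hessian annihilates `(u, v)`; explicitly it is `λ ζ ζᵀ` with `ζ = (v, -u)`
and `λ = a(a-1)/2 · u^(a-2) v^(-a-1)`. Hence the determinant vanishes, and for `a ∉ {0, 1}` the
scalar `λ` is nonzero, so the Hessian has rank exactly one.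
-/

/-- Wirtinger derivative `∂f/∂z^j`. -/
noncomputable def wD {n : ℕ} (f : (Fin n → ℂ) → ℂ) (j : Fin n) (x : Fin n → ℂ) : ℂ :=
  (fderiv ℝ f x (Pi.single j 1) - Complex.I * fderiv ℝ f x (Pi.single j Complex.I)) / 2

/-- Wirtinger derivative `∂f/∂z̄^j`. -/
noncomputable def wDbar {n : ℕ} (f : (Fin n → ℂ) → ℂ) (j : Fin n) (x : Fin n → ℂ) : ℂ :=
  (fderiv ℝ f x (Pi.single j 1) + Complex.I * fderiv ℝ f x (Pi.single j Complex.I)) / 2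

/-- Iterated Wirtinger derivative `f_{jk̄} = ∂²f/∂z^j∂z̄^k`. -/
noncomputable def w2 {n : ℕ} (f : (Fin n → ℂ) → ℂ) (j k : Fin n) (x : Fin n → ℂ) : ℂ :=
  wD (fun y => wDbar f k y) j x

/-- The potential `ρ_a(z) = 2(Re z¹ + 1)^a (Re z² + 1)^{1−a}` (real powers). -/
noncomputable def rhoA (a : ℝ) (z : Fin 2 → ℂ) : ℝ :=
  2 * ((z 0).re + 1) ^ a * ((z 1).re + 1) ^ (1 - a)

/-- `ρ_a` as a complex-valued function. -/
noncomputable def rhoAC (a : ℝ) : (Fin 2 → ℂ) → ℂ := fun z => ((rhoA a z : ℝ) : ℂ)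

/-- The domain `M = {|Re z¹| < 1, |z²| < 1}`. -/
def MSet : Set (Fin 2 → ℂ) := {z | |(z 0).re| < 1 ∧ ‖z 1‖ < 1}

open Matrix Filter Topology

theorem Matrix.rank_vecMulVec_eq_one {m n K : Type*} [Fintype n] [Field K]
    {w : m → K} {v : n → K} (hw : w ≠ 0) (hv : v ≠ 0) : (vecMulVec w v).rank = 1 := by
  refine le_antisymm (rank_vecMulVec_le w v) (Nat.one_le_iff_ne_zero.mpr ?_)
  obtain ⟨i, hi⟩ := Function.ne_iff.mp hw
  obtain ⟨j, hj⟩ := Function.ne_iff.mp hv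
  rw [Matrix.rank, Ne, Submodule.finrank_eq_zero, range_mulVecLin, Submodule.span_eq_bot]
  push Not
  exact ⟨_, Set.mem_range_self j, Function.ne_iff.mpr ⟨i, mul_ne_zero hi hj⟩⟩

section Wirtinger

variable {n : ℕ} {f : (Fin n → ℂ) → ℂ} {j : Fin n} {x : Fin n → ℂ}

theorem wD_eq_half_fderiv (h : fderiv ℝ f x (Pi.single j Complex.I) = 0) :
    wD f j x = fderiv ℝ f x (Pi.single j 1) / 2 := by
  simp [wD, h]

theorem wDbar_eq_half_fderiv (h : fderiv ℝ f x (Pi.single j Complex.I) = 0) :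
    wDbar f j x = fderiv ℝ f x (Pi.single j 1) / 2 := by
  simp [wDbar, h]

theorem w2_eq_wD_of_eventuallyEq {g : (Fin n → ℂ) → ℂ} {k : Fin n}
    (h : (fun y => wDbar f k y) =ᶠ[𝓝 x] g) : w2 f j k x = wD g j x := by
  unfold w2 wD
  rw [h.fderiv_eq]

end Wirtinger

noncomputable def reMonomial (c p q : ℝ) : (Fin 2 → ℂ) → ℂ :=
  fun y => ((c * ((y 0).re + 1) ^ p * ((y 1).re + 1) ^ q : ℝ) : ℂ)

def halfPlanes : Set (Fin 2 → ℂ) := {y | 0 < (y 0).re + 1 ∧ 0 < (y 1).re + 1}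

theorem isOpen_halfPlanes : IsOpen halfPlanes :=
  (isOpen_lt continuous_const (by fun_prop : Continuous fun y : Fin 2 → ℂ => (y 0).re + 1)).inter
    (isOpen_lt continuous_const (by fun_prop : Continuous fun y : Fin 2 → ℂ => (y 1).re + 1))

theorem MSet_subset_halfPlanes : MSet ⊆ halfPlanes := fun z ⟨hz0, hz1⟩ =>
  ⟨by linarith [neg_abs_le (z 0).re],
    by linarith [neg_abs_le (z 1).re, Complex.abs_re_le_norm (z 1)]⟩

theorem rhoAC_eq_reMonomial (a : ℝ) : rhoAC a = reMonomial 2 a (1 - a) := rfl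

namespace reMonomial

variable (c p q : ℝ) {y : Fin 2 → ℂ}

theorem fderiv_apply (hy : y ∈ halfPlanes) (w : Fin 2 → ℂ) :
    fderiv ℝ (reMonomial c p q) y w =
      ((c * p * ((y 0).re + 1) ^ (p - 1) * ((y 1).re + 1) ^ q * (w 0).re
        + c * q * ((y 0).re + 1) ^ p * ((y 1).re + 1) ^ (q - 1) * (w 1).re : ℝ) : ℂ) := by
  have hre (i : Fin 2) : HasFDerivAt (fun y : Fin 2 → ℂ => (y i).re + 1)
      (Complex.reCLM.comp (ContinuousLinearMap.proj i)) y :=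
    ((Complex.reCLM.comp (ContinuousLinearMap.proj (R := ℝ) (φ := fun _ : Fin 2 => ℂ) i)
      ).hasFDerivAt (x := y)).add_const 1
  have H := (((hre 0).rpow_const (p := p) (Or.inl hy.1.ne')).const_mul c).mul
    ((hre 1).rpow_const (p := q) (Or.inl hy.2.ne'))
  have H' : HasFDerivAt (reMonomial c p q) _ y := Complex.ofRealCLM.hasFDerivAt.comp y H
  rw [H'.fderiv]
  simp only [ContinuousLinearMap.comp_apply, ContinuousLinearMap.comp_add,
    ContinuousLinearMap.comp_smulₛₗ, _root_.add_apply, _root_.smul_apply,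
    ContinuousLinearMap.proj_apply, Complex.reCLM_apply, Complex.ofRealCLM_apply,
    Real.ringHom_apply, Complex.real_smul]
  push_cast
  ring

theorem fderiv_single_I (hy : y ∈ halfPlanes) (j : Fin 2) :
    fderiv ℝ (reMonomial c p q) y (Pi.single j Complex.I) = 0 := by
  rw [fderiv_apply c p q hy]
  fin_cases j <;> simp

theorem wD_zero (hy : y ∈ halfPlanes) :
    wD (reMonomial c p q) 0 y = reMonomial (c * p / 2) (p - 1) q y := by
  rw [wD_eq_half_fderiv (fderiv_single_I c p q hy 0), fderiv_apply c p q hy]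
  simp only [reMonomial, Pi.single_eq_same, Pi.single_eq_of_ne one_ne_zero, Complex.one_re,
    Complex.zero_re]
  push_cast
  ring

theorem wD_one (hy : y ∈ halfPlanes) :
    wD (reMonomial c p q) 1 y = reMonomial (c * q / 2) p (q - 1) y := by
  rw [wD_eq_half_fderiv (fderiv_single_I c p q hy 1), fderiv_apply c p q hy]
  simp only [reMonomial, Pi.single_eq_same, Pi.single_eq_of_ne zero_ne_one, Complex.one_re,
    Complex.zero_re]
  push_cast
  ring

theorem wDbar_eq_wD (hy : y ∈ halfPlanes) (j : Fin 2) :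
    wDbar (reMonomial c p q) j y = wD (reMonomial c p q) j y := by
  rw [wD_eq_half_fderiv (fderiv_single_I c p q hy j),
    wDbar_eq_half_fderiv (fderiv_single_I c p q hy j)]

theorem wDbar_zero_eventuallyEq (hy : y ∈ halfPlanes) :
    (fun y' => wDbar (reMonomial c p q) 0 y') =ᶠ[𝓝 y] reMonomial (c * p / 2) (p - 1) q :=
  eventually_of_mem (isOpen_halfPlanes.mem_nhds hy) fun _ hy' =>
    (wDbar_eq_wD c p q hy' 0).trans (wD_zero c p q hy')

theorem wDbar_one_eventuallyEq (hy : y ∈ halfPlanes) :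
    (fun y' => wDbar (reMonomial c p q) 1 y') =ᶠ[𝓝 y] reMonomial (c * q / 2) p (q - 1) :=
  eventually_of_mem (isOpen_halfPlanes.mem_nhds hy) fun _ hy' =>
    (wDbar_eq_wD c p q hy' 1).trans (wD_one c p q hy')

theorem hessian (hy : y ∈ halfPlanes) :
    Matrix.of (fun j k => w2 (reMonomial c p q) j k y) =
      !![reMonomial (c * p * (p - 1) / 4) (p - 2) q y,
          reMonomial (c * p * q / 4) (p - 1) (q - 1) y;
        reMonomial (c * p * q / 4) (p - 1) (q - 1) y,
          reMonomial (c * q * (q - 1) / 4) p (q - 2) y] := by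
  ext j k
  fin_cases j <;> fin_cases k <;>
    simp only [Fin.zero_eta, Fin.mk_one, of_apply, cons_val_zero, cons_val_one, cons_val_fin_one,
      w2_eq_wD_of_eventuallyEq (wDbar_zero_eventuallyEq c p q hy),
      w2_eq_wD_of_eventuallyEq (wDbar_one_eventuallyEq c p q hy), wD_zero _ _ _ hy,
      wD_one _ _ _ hy] <;> ring_nf

end reMonomial

theorem hessian_rhoAC (a : ℝ) {z : Fin 2 → ℂ} (hz : z ∈ halfPlanes) :
    Matrix.of (fun j k => w2 (rhoAC a) j k z) =
      ((a * (a - 1) / 2 * ((z 0).re + 1) ^ (a - 2) * ((z 1).re + 1) ^ (-a - 1) : ℝ) : ℂ) •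
        vecMulVec ![(((z 1).re + 1 : ℝ) : ℂ), -(((z 0).re + 1 : ℝ) : ℂ)]
          ![(((z 1).re + 1 : ℝ) : ℂ), -(((z 0).re + 1 : ℝ) : ℂ)] := by
  rw [rhoAC_eq_reMonomial, reMonomial.hessian _ _ _ hz]
  simp only [reMonomial]
  set u := (z 0).re + 1
  set v := (z 1).re + 1
  have hu : u ≠ 0 := hz.1.ne'
  have hv : v ≠ 0 := hz.2.ne'
  have hu1 : u ^ (a - 1) = u ^ (a - 2) * u := by rw [← Real.rpow_add_one hu]; ring_nf
  have hu0 : u ^ a = u ^ (a - 2) * u * u := by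
    rw [← Real.rpow_add_one hu, ← Real.rpow_add_one hu]; ring_nf
  have hv1 : v ^ (1 - a - 1) = v ^ (-a - 1) * v := by rw [← Real.rpow_add_one hv]; ring_nf
  have hv0 : v ^ (1 - a) = v ^ (-a - 1) * v * v := by
    rw [← Real.rpow_add_one hv, ← Real.rpow_add_one hv]; ring_nf
  have hv2 : v ^ (1 - a - 2) = v ^ (-a - 1) := by ring_nf
  rw [hu1, hu0, hv1, hv0, hv2]
  ext j k
  fin_cases j <;> fin_cases k <;>
    simp only [Fin.zero_eta, Fin.mk_one, of_apply, cons_val_zero, cons_val_one, cons_val_fin_one,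
      Matrix.smul_apply, vecMulVec_apply, smul_eq_mul] <;> push_cast <;> ring

theorem stmt6 (a : ℝ) (z : Fin 2 → ℂ) (hz : z ∈ MSet) :
    w2 (rhoAC a) 0 0 z * w2 (rhoAC a) 1 1 z
      - w2 (rhoAC a) 0 1 z * w2 (rhoAC a) 1 0 z = 0 ∧
    (a ≠ 0 → a ≠ 1 →
      w2 (rhoAC a) 0 0 z ≠ 0 ∧
      (Matrix.of fun j k : Fin 2 => w2 (rhoAC a) j k z).rank = 1) := by
  have hz' := MSet_subset_halfPlanes hz
  have hH := hessian_rhoAC a hz'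
  set lam : ℂ :=
    ((a * (a - 1) / 2 * ((z 0).re + 1) ^ (a - 2) * ((z 1).re + 1) ^ (-a - 1) : ℝ) : ℂ)
  set ζ : Fin 2 → ℂ := ![(((z 1).re + 1 : ℝ) : ℂ), -(((z 0).re + 1 : ℝ) : ℂ)]
  have entry (j k : Fin 2) : w2 (rhoAC a) j k z = lam * (ζ j * ζ k) :=
    congrFun (congrFun hH j) k
  refine ⟨by simp only [entry]; ring, fun ha0 ha1 => ?_⟩
  have hlam : lam ≠ 0 := by
    simp only [lam, Complex.ofReal_ne_zero]
    exact mul_ne_zero (mul_ne_zero (by simp [ha0, sub_ne_zero.mpr ha1])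
      (Real.rpow_pos_of_pos hz'.1 _).ne') (Real.rpow_pos_of_pos hz'.2 _).ne'
  have hζ0 : ζ 0 ≠ 0 := Complex.ofReal_ne_zero.mpr hz'.2.ne'
  have hζ : ζ ≠ 0 := fun h => hζ0 (congrFun h 0)
  refine ⟨entry 0 0 ▸ mul_ne_zero hlam (mul_ne_zero hζ0 hζ0), ?_⟩
  rw [hH, ← smul_vecMulVec, rank_vecMulVec_eq_one (smul_ne_zero hlam hζ) hζ]
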